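/- arXiv:cs/0205010 — 3 statements merged into one kernel-verified Lean document; each statement's English description precedes it below -/
import Mathlib

section
/- Let k be a natural number and define, for real x ≥ 1, f(x) = 2^k · ⌊log₂ x⌋ + ⌊x / 2^{⌊log₂ x⌋ - k}⌋ - 2^k. Then f is monotone nondecreasing: for all real x, y with 1 ≤ x ≤ y, f(x) ≤ f(y). -/
/-!
Write `ℓ = ⌊log₂ x⌋ = Int.log 2 x` and `m = ⌊x / 2^(ℓ - k)⌋`. From `2^ℓ ≤ x < 2^(ℓ+1)` the
mantissa `m` lies in `[2^k, 2^(k+1))`, so `f x = 2^k ℓ + (m - 2^k)` encodes the pair `(ℓ, m)`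
lexicographically with a last digit below `2^k`. Both `ℓ` and, for fixed `ℓ`, `m` are
nondecreasing in `x`; when `ℓ` jumps, the jump of `2^k ℓ` outweighs any drop of the digit.
-/

namespace ReductionMap

noncomputable def mantissa (k : ℕ) (x : ℝ) : ℤ :=
  ⌊x / (2 : ℝ) ^ (Int.log 2 x - k)⌋

noncomputable def encode (k : ℕ) (x : ℝ) : ℤ :=
  2 ^ k * Int.log 2 x + mantissa k x - 2 ^ k

variable {k : ℕ} {x y : ℝ}

lemma two_pow_le_mantissa (hx : 0 < x) : 2 ^ k ≤ mantissa k x := by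
  have hpos : (0 : ℝ) < 2 ^ (Int.log 2 x - k) := zpow_pos two_pos _
  have hlog : (2 : ℝ) ^ Int.log 2 x ≤ x := mod_cast Int.zpow_log_le_self (b := 2) one_lt_two hx
  refine Int.le_floor.mpr ?_
  rw [le_div_iff₀ hpos]
  calc ((2 ^ k : ℤ) : ℝ) * 2 ^ (Int.log 2 x - k) = 2 ^ Int.log 2 x := by
        rw [Int.cast_pow, Int.cast_ofNat, ← zpow_natCast, ← zpow_add₀ two_ne_zero, add_sub_cancel]
    _ ≤ x := hlog

lemma mantissa_lt_two_pow_succ (k : ℕ) (x : ℝ) : mantissa k x < 2 ^ (k + 1) := by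
  have hpos : (0 : ℝ) < 2 ^ (Int.log 2 x - k) := zpow_pos two_pos _
  have hlog : x < (2 : ℝ) ^ (Int.log 2 x + 1) :=
    mod_cast Int.lt_zpow_succ_log_self (b := 2) one_lt_two x
  refine Int.floor_lt.mpr ?_
  rw [div_lt_iff₀ hpos]
  calc x < 2 ^ (Int.log 2 x + 1) := hlog
    _ = ((2 ^ (k + 1) : ℤ) : ℝ) * 2 ^ (Int.log 2 x - k) := by
        rw [Int.cast_pow, Int.cast_ofNat, ← zpow_natCast, ← zpow_add₀ two_ne_zero]
        congr 1
        push_cast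
        ring

lemma mantissa_le_mantissa_of_log_eq (hxy : x ≤ y) (hlog : Int.log 2 x = Int.log 2 y) :
    mantissa k x ≤ mantissa k y := by
  unfold mantissa
  rw [hlog]
  gcongr

lemma _root_.Int.mul_add_le_mul_add_of_lt {c ℓ₁ ℓ₂ m₁ m₂ : ℤ} (hc : 0 ≤ c) (hℓ : ℓ₁ < ℓ₂)
    (hm₁ : m₁ ≤ 2 * c) (hm₂ : c ≤ m₂) : c * ℓ₁ + m₁ ≤ c * ℓ₂ + m₂ := by
  have hstep : c * (ℓ₁ + 1) ≤ c * ℓ₂ := mul_le_mul_of_nonneg_left hℓ hc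
  linarith

theorem encode_monotoneOn : MonotoneOn (encode k) (Set.Ioi 0) := by
  intro x hx y hy hxy
  unfold encode
  rcases (Int.log_mono_right (b := 2) hx hxy).eq_or_lt with hlog | hlog
  · rw [hlog]
    linarith [mantissa_le_mantissa_of_log_eq (k := k) hxy hlog]
  · have hm₁ : mantissa k x ≤ 2 * 2 ^ k := by
      have := mantissa_lt_two_pow_succ k x
      rw [pow_succ] at this
      linarith
    linarith [Int.mul_add_le_mul_add_of_lt (by positivity) hlog hm₁ (two_pow_le_mantissa hy)]

lemma floor_logb_two (hx : 0 ≤ x) : ⌊Real.logb 2 x⌋ = Int.log 2 x :=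
  mod_cast Real.floor_logb_natCast (b := 2) hx

end ReductionMap

open ReductionMap in
/-- The universe-reduction map
`f(x) = 2^k · ⌊log₂ x⌋ + ⌊x / 2^(⌊log₂ x⌋ - k)⌋ - 2^k`
is monotone nondecreasing on `[1, ∞)`. -/
theorem reduction_map_monotone (k : ℕ)
    (f : ℝ → ℤ)
    (hf : ∀ x : ℝ, 1 ≤ x →
      f x = 2 ^ k * ⌊Real.logb 2 x⌋ + ⌊x / (2 : ℝ) ^ (⌊Real.logb 2 x⌋ - (k : ℤ))⌋ - 2 ^ k) :
    ∀ x y : ℝ, 1 ≤ x → x ≤ y → f x ≤ f y := by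
  have hf_eq : ∀ x : ℝ, 1 ≤ x → f x = encode k x := fun x hx => by
    rw [hf x hx, floor_logb_two (by linarith), encode, mantissa]
  intro x y hx hxy
  have hy : 1 ≤ y := hx.trans hxy
  rw [hf_eq x hx, hf_eq y hy]
  exact encode_monotoneOn (show (0 : ℝ) < x by linarith) (show (0 : ℝ) < y by linarith) hxy
end

section
/- Let ε be a real number with 0 < ε ≤ 1, let k = ⌈log₂(1/ε)⌉, and define, for real x ≥ 1, f(x) = 2^k · ⌊log₂ x⌋ + ⌊x / 2^{⌊log₂ x⌋ - k}⌋ - 2^k. Then for all real x, y with x ≥ 1 and y ≥ (1+ε)·x, one has f(y) > f(x); that is, f preserves the strict order of any two elements differing by at least a factor of 1+ε. -/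
/-!
Write `ℓ = ⌊log₂ x⌋` and `m = ⌊x / 2^(ℓ-k)⌋`, so that `2^k ≤ m < 2^(k+1)` and
`f x = 2^k ℓ + (m - 2^k) ∈ [2^k ℓ, 2^k (ℓ+1))`. If `⌊log₂ y⌋ > ℓ`, these intervals already separate
`f x < f y`. Otherwise both share the scale `2^(ℓ-k) ≤ 2^ℓ / 2^k ≤ ε x ≤ y - x`, because
`2^k ≥ 1/ε`, so `y / 2^(ℓ-k) ≥ x / 2^(ℓ-k) + 1` and the floors differ.
-/

namespace Int

variable {R : Type*} [Field R] [LinearOrder R] [IsStrictOrderedRing R] [FloorRing R]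

theorem pow_le_floor_div_zpow_log_sub {b : ℕ} (hb : 1 < b) (k : ℕ) {x : R} (hx : 0 < x) :
    (b : ℤ) ^ k ≤ ⌊x / (b : R) ^ (log b x - k)⌋ := by
  have hb0 : (0 : R) < b := by exact_mod_cast (zero_lt_one.trans hb)
  rw [le_floor, le_div_iff₀ (zpow_pos hb0 _)]
  calc (((b : ℤ) ^ k : ℤ) : R) * (b : R) ^ (log b x - k)
      = (b : R) ^ log b x := by
        push_cast
        rw [← zpow_natCast, ← zpow_add₀ hb0.ne', add_sub_cancel]
    _ ≤ x := zpow_log_le_self hb hx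

theorem floor_div_zpow_log_sub_lt {b : ℕ} (hb : 1 < b) (k : ℕ) (x : R) :
    ⌊x / (b : R) ^ (log b x - k)⌋ < b ^ (k + 1) := by
  have hb0 : (0 : R) < b := by exact_mod_cast (zero_lt_one.trans hb)
  rw [floor_lt, div_lt_iff₀ (zpow_pos hb0 _)]
  calc x < (b : R) ^ (log b x + 1) := lt_zpow_succ_log_self hb x
    _ = (((b : ℤ) ^ (k + 1) : ℤ) : R) * (b : R) ^ (log b x - k) := by
        push_cast
        rw [← zpow_natCast, ← zpow_add₀ hb0.ne']
        congr 1
        push_cast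
        ring

theorem zpow_log_sub_le_mul {b k : ℕ} (hb : 1 < b) {ε x : R} (hε : 1 ≤ ε * b ^ k) (hx : 0 < x) :
    (b : R) ^ (log b x - k) ≤ ε * x := by
  have hb0 : (0 : R) < b := by exact_mod_cast (zero_lt_one.trans hb)
  have hε0 : 0 < ε := pos_of_mul_pos_left (zero_lt_one.trans_le hε) (by positivity)
  calc (b : R) ^ (log b x - k) ≤ (b : R) ^ (log b x - k) * (ε * b ^ k) :=
        le_mul_of_one_le_right (zpow_pos hb0 _).le hε
    _ = ε * b ^ log b x := by
        rw [← zpow_natCast, mul_left_comm, ← zpow_add₀ hb0.ne', sub_add_cancel]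
    _ ≤ ε * x := by
        gcongr
        exact zpow_log_le_self hb hx

theorem floor_div_add_one_le {s x y : R} (hs : 0 < s) (h : x + s ≤ y) :
    ⌊x / s⌋ + 1 ≤ ⌊y / s⌋ := by
  rw [← floor_add_one, div_add_one hs.ne']
  exact floor_le_floor (div_le_div_of_nonneg_right h hs.le)

end Int

open Int

variable {R : Type*} [Field R] [LinearOrder R] [IsStrictOrderedRing R] [FloorRing R]

/-- The map of the theorem, with `⌊log₂ x⌋` written as `Int.log 2 x`. -/
def reductionMap (k : ℕ) (x : R) : ℤ :=
  2 ^ k * log 2 x + ⌊x / (2 : R) ^ (log 2 x - k)⌋ - 2 ^ k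

theorem reductionMap_mem_Ico (k : ℕ) {x : R} (hx : 0 < x) :
    reductionMap k x ∈ Set.Ico (2 ^ k * log 2 x) (2 ^ k * (log 2 x + 1)) := by
  have hlo := pow_le_floor_div_zpow_log_sub one_lt_two k hx
  have hhi := floor_div_zpow_log_sub_lt one_lt_two k x
  push_cast at hlo hhi
  rw [pow_succ] at hhi
  constructor <;> unfold reductionMap <;> linarith

theorem reductionMap_lt_of_log_lt (k : ℕ) {x y : R} (hx : 0 < x) (hy : 0 < y)
    (h : log 2 x < log 2 y) : reductionMap k x < reductionMap k y :=
  calc reductionMap k x < 2 ^ k * (log 2 x + 1) := (reductionMap_mem_Ico k hx).2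
    _ ≤ 2 ^ k * log 2 y := by gcongr; exact h
    _ ≤ reductionMap k y := (reductionMap_mem_Ico k hy).1

theorem reductionMap_lt_of_log_eq (k : ℕ) {x y : R} (h : log 2 x = log 2 y)
    (hxy : x + (2 : R) ^ (log 2 x - k) ≤ y) : reductionMap k x < reductionMap k y := by
  have := floor_div_add_one_le (zpow_pos two_pos _) hxy
  unfold reductionMap
  rw [← h]
  linarith

theorem reductionMap_lt_of_one_add_mul_le {k : ℕ} {ε x y : R} (hε : 1 ≤ ε * 2 ^ k)
    (hx : 0 < x) (hxy : (1 + ε) * x ≤ y) : reductionMap k x < reductionMap k y := by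
  have hstep : (2 : R) ^ (log 2 x - k) ≤ ε * x := by
    exact_mod_cast zpow_log_sub_le_mul (b := 2) (by norm_num) (by exact_mod_cast hε) hx
  have hx_add : x + (2 : R) ^ (log 2 x - k) ≤ y := by linarith
  have hle : x ≤ y := by linarith [(zpow_pos two_pos (log 2 x - k) : (0 : R) < _)]
  rcases (log_mono_right hx hle).lt_or_eq with hlt | heq
  · exact reductionMap_lt_of_log_lt k hx (hx.trans_le hle) hlt
  · exact reductionMap_lt_of_log_eq k heq hx_add

theorem one_le_mul_zpow_clog_inv {b : ℕ} (hb : 1 < b) {ε : R} (hε : 0 < ε) :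
    1 ≤ ε * (b : R) ^ clog b ε⁻¹ := by
  rw [← inv_mul_le_iff₀ hε, mul_one]
  exact self_le_zpow_clog hb _

theorem reduction_map_separates_general (ε : ℝ) (hε : 0 < ε)
    (k : ℕ) (hk : (k : ℤ) = ⌈Real.logb 2 (1 / ε)⌉)
    (f : ℝ → ℤ)
    (hf : ∀ x : ℝ, 1 ≤ x →
      f x = 2 ^ k * ⌊Real.logb 2 x⌋ + ⌊x / (2 : ℝ) ^ (⌊Real.logb 2 x⌋ - (k : ℤ))⌋ - 2 ^ k) :
    ∀ x y : ℝ, 1 ≤ x → y ≥ (1 + ε) * x → f y > f x := by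
  have hf_eq : ∀ x : ℝ, 1 ≤ x → f x = reductionMap k x := fun x hx => by
    have hlog : ⌊Real.logb 2 x⌋ = log 2 x := by
      exact_mod_cast Real.floor_logb_natCast (b := 2) (zero_le_one.trans hx)
    rw [hf x hx, hlog, reductionMap]
  have hk_clog : (k : ℤ) = clog 2 ε⁻¹ := by
    rw [hk, one_div]
    exact_mod_cast Real.ceil_logb_natCast (b := 2) (inv_nonneg.mpr hε.le)
  have hεk : 1 ≤ ε * 2 ^ k := by
    simpa [← hk_clog] using one_le_mul_zpow_clog_inv (b := 2) one_lt_two hε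
  intro x y hx hxy
  have hy : 1 ≤ y := by nlinarith
  rw [hf_eq x hx, hf_eq y hy]
  exact reductionMap_lt_of_one_add_mul_le hεk (zero_lt_one.trans_le hx) hxy

/-- With `k = ⌈log₂(1/ε)⌉` for `0 < ε ≤ 1`, the universe-reduction map
`f(x) = 2^k · ⌊log₂ x⌋ + ⌊x / 2^(⌊log₂ x⌋ - k)⌋ - 2^k`
preserves the strict order of any two elements differing by at least a factor `1+ε`. -/
theorem reduction_map_separates (ε : ℝ) (hε : 0 < ε) (hε1 : ε ≤ 1)
    (k : ℕ) (hk : (k : ℤ) = ⌈Real.logb 2 (1 / ε)⌉)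
    (f : ℝ → ℤ)
    (hf : ∀ x : ℝ, 1 ≤ x →
      f x = 2 ^ k * ⌊Real.logb 2 x⌋ + ⌊x / (2 : ℝ) ^ (⌊Real.logb 2 x⌋ - (k : ℤ))⌋ - 2 ^ k) :
    ∀ x y : ℝ, 1 ≤ x → y ≥ (1 + ε) * x → f y > f x :=
  reduction_map_separates_general ε hε k hk f hf
end

section
/- Let w and i be natural numbers such that the bitwise-and of w with 2^i − 1 is nonzero, and let j = ⌊log₂(w AND (2^i − 1))⌋. Then bit j of w is set, j < i, and every index j' < i whose bit is set in w satisfies j' ≤ j; that is, j is the index of the most significant 1-bit of w among the bits of index less than i. -/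
/-!
Masking with `2 ^ i - 1` keeps exactly the bits of `w` below `i`, so `w &&& (2 ^ i - 1)` is
`w % 2 ^ i`. For any nonzero `m`, `⌊log₂ m⌋` is the index of the highest set bit of `m`:
that bit is set because `2 ^ ⌊log₂ m⌋ ≤ m < 2 ^ (⌊log₂ m⌋ + 1)`, and no higher bit is set
because a set bit `j` forces `2 ^ j ≤ m`.
-/

namespace Nat

theorem testBit_log_two_self {m : ℕ} (hm : m ≠ 0) : m.testBit (log 2 m) := by
  rw [← log2_eq_log_two]
  exact testBit_log2 hm

theorem le_log_two_of_testBit {m j : ℕ} (h : m.testBit j) : j ≤ log 2 m :=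
  le_log_of_pow_le one_lt_two (ge_two_pow_of_testBit h)

end Nat

/-- Correctness of the bit-vector `Search` operation: if `w AND (2^i − 1)` is nonzero
and `j = ⌊log₂ (w AND (2^i − 1))⌋`, then bit `j` of `w` is set, `j < i`, and `j` is the
largest index `< i` whose bit is set in `w`. -/
theorem bitvector_search_correct (w i : ℕ) (h : w &&& (2 ^ i - 1) ≠ 0) :
    w.testBit (Nat.log 2 (w &&& (2 ^ i - 1))) ∧
      Nat.log 2 (w &&& (2 ^ i - 1)) < i ∧
      ∀ j' : ℕ, j' < i → w.testBit j' → j' ≤ Nat.log 2 (w &&& (2 ^ i - 1)) := by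
  rw [Nat.and_two_pow_sub_one_eq_mod] at h ⊢
  have hset := Nat.testBit_log_two_self h
  rw [Nat.testBit_mod_two_pow, Bool.and_eq_true, decide_eq_true_eq] at hset
  refine ⟨hset.2, hset.1, fun j hj hwj => Nat.le_log_two_of_testBit ?_⟩
  simp [Nat.testBit_mod_two_pow, hj, hwj]
end
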